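/- arXiv:2501.16815 — 4 statements merged into one kernel-verified Lean document; each statement's English description precedes it below -/
import Mathlib

section
/- Define f(S) = min over β ∈ ℝ^p with supp(β) ⊆ S of ‖y − Xβ‖². Let S ⊆ {1,…,p}, r the least-squares residual on S, and assume for all j ∉ S that X_j is not in the span of the columns of X_S. If j* maximizes the score (rᵀ X_j)² / (X_jᵀ (I − X_S(X_Sᵀ X_S)⁻¹ X_Sᵀ) X_j) over j ∈ Sᶜ, then f(S ∪ {j*}) ≤ f(S ∪ {j}) for all j ∈ Sᶜ. -/
/-! Let `M = I - X_S (X_Sᵀ X_S)⁻¹ X_Sᵀ`, `r = M y` and `u = M X_j`. Since `M` kills the columns in `S`,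
for `β` supported on `S ∪ {j}` we get `‖y - X β‖² ≥ ‖M (y - X β)‖² = ‖r - β_j u‖²`, and the
one-dimensional least-squares bound gives `‖r - t u‖² ≥ ‖r‖² - (r ⬝ u)² / ‖u‖²`. Both bounds are
attained (at the optimal `t`, fitting `y - t X_j` on `X_S`), so `f(S ∪ {j}) = ‖r‖² - score j`, the
score being `(r ⬝ u)² / ‖u‖²` because `M` is a symmetric idempotent. Maximizing the score therefore
minimizes `f`. -/

open Matrix

def cols {n p : ℕ} (X : Matrix (Fin n) (Fin p) ℝ) (S : Finset (Fin p)) :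
    Matrix (Fin n) ↥S ℝ :=
  X.submatrix id Subtype.val

noncomputable def fobj {n p : ℕ} (X : Matrix (Fin n) (Fin p) ℝ) (y : Fin n → ℝ)
    (T : Finset (Fin p)) : ℝ :=
  sInf {c : ℝ | ∃ β : Fin p → ℝ, (∀ j ∉ T, β j = 0) ∧
    c = (y - X.mulVec β) ⬝ᵥ (y - X.mulVec β)}

/-- The objective-based selection score for candidate `j`. -/
noncomputable def score {n p : ℕ} (X : Matrix (Fin n) (Fin p) ℝ) (y : Fin n → ℝ)
    (S : Finset (Fin p)) (j : Fin p) : ℝ :=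
  ((y - (cols X S * ((cols X S)ᵀ * cols X S)⁻¹ * (cols X S)ᵀ).mulVec y) ⬝ᵥ (Xᵀ j)) ^ 2 /
    ((Xᵀ j) ⬝ᵥ ((1 - cols X S * ((cols X S)ᵀ * cols X S)⁻¹ * (cols X S)ᵀ).mulVec (Xᵀ j)))

variable {m ι K : Type*} [Fintype m]

section LinearOrderedField

variable [Field K] [LinearOrder K] [IsStrictOrderedRing K]

lemma dotProduct_self_nonneg (v : m → K) : 0 ≤ v ⬝ᵥ v :=
  Fintype.sum_nonneg fun _ => mul_self_nonneg _

-- For `u = 0` the value reads `r ⬝ᵥ r - 0 / 0 = r ⬝ᵥ r`, which is still the minimum.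
lemma isLeast_dotProduct_sub_smul_self (r u : m → K) :
    IsLeast (Set.range fun t : K => (r - t • u) ⬝ᵥ (r - t • u))
      (r ⬝ᵥ r - (r ⬝ᵥ u) ^ 2 / (u ⬝ᵥ u)) := by
  have hexpand (t : K) : (r - t • u) ⬝ᵥ (r - t • u) =
      r ⬝ᵥ r - 2 * t * (r ⬝ᵥ u) + t ^ 2 * (u ⬝ᵥ u) := by
    simp only [sub_dotProduct, dotProduct_sub, smul_dotProduct, dotProduct_smul, smul_eq_mul,
      dotProduct_comm u r]
    ring
  rcases eq_or_ne u 0 with rfl | hu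
  · simp
  have hd : 0 < u ⬝ᵥ u :=
    (dotProduct_self_nonneg u).lt_of_ne' (dotProduct_self_eq_zero.not.mpr hu)
  refine ⟨⟨(r ⬝ᵥ u) / (u ⬝ᵥ u), ?_⟩, ?_⟩
  · dsimp only
    rw [hexpand]
    field_simp
    ring
  · rintro _ ⟨t, rfl⟩
    calc r ⬝ᵥ r - (r ⬝ᵥ u) ^ 2 / (u ⬝ᵥ u)
        ≤ r ⬝ᵥ r - (r ⬝ᵥ u) ^ 2 / (u ⬝ᵥ u) + (t * (u ⬝ᵥ u) - r ⬝ᵥ u) ^ 2 / (u ⬝ᵥ u) :=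
          le_add_of_nonneg_right (by positivity)
      _ = (r - t • u) ⬝ᵥ (r - t • u) := by
          rw [hexpand]
          field_simp
          ring

end LinearOrderedField

variable [DecidableEq m] [Fintype ι] [DecidableEq ι]

section CommRing

variable {R : Type*} [CommRing R]

noncomputable def residualMaker (A : Matrix m ι R) : Matrix m m R := 1 - A * (Aᵀ * A)⁻¹ * Aᵀ

lemma residualMaker_transpose (A : Matrix m ι R) : (residualMaker A)ᵀ = residualMaker A := by
  simp only [residualMaker, transpose_sub, transpose_one, transpose_mul, transpose_transpose,
    transpose_nonsing_inv, Matrix.mul_assoc]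

lemma residualMaker_mulVec_dotProduct_comm (A : Matrix m ι R) (v w : m → R) :
    residualMaker A *ᵥ v ⬝ᵥ w = v ⬝ᵥ residualMaker A *ᵥ w := by
  rw [dotProduct_comm, dotProduct_mulVec, ← mulVec_transpose, residualMaker_transpose,
    dotProduct_comm]

lemma sub_mulVec_eq_residualMaker_mulVec (A : Matrix m ι R) (v : m → R) :
    v - A *ᵥ (((Aᵀ * A)⁻¹ * Aᵀ) *ᵥ v) = residualMaker A *ᵥ v := by
  rw [residualMaker, sub_mulVec, one_mulVec, mulVec_mulVec, Matrix.mul_assoc]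

variable {A : Matrix m ι R}

lemma residualMaker_mul (hA : IsUnit (Aᵀ * A)) : residualMaker A * A = 0 := by
  rw [residualMaker, Matrix.sub_mul, Matrix.one_mul, Matrix.mul_assoc, Matrix.mul_assoc,
    nonsing_inv_mul _ ((isUnit_iff_isUnit_det _).mp hA), Matrix.mul_one, sub_self]

lemma residualMaker_mulVec_mulVec (hA : IsUnit (Aᵀ * A)) (c : ι → R) :
    residualMaker A *ᵥ (A *ᵥ c) = 0 := by
  rw [mulVec_mulVec, residualMaker_mul hA, zero_mulVec]

lemma residualMaker_mul_self (hA : IsUnit (Aᵀ * A)) :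
    residualMaker A * residualMaker A = residualMaker A := by
  nth_rw 2 [residualMaker]
  rw [Matrix.mul_sub, Matrix.mul_one, ← Matrix.mul_assoc, ← Matrix.mul_assoc,
    residualMaker_mul hA, Matrix.zero_mul, Matrix.zero_mul, sub_zero]

lemma residualMaker_mulVec_dotProduct_residualMaker_mulVec (hA : IsUnit (Aᵀ * A)) (v w : m → R) :
    residualMaker A *ᵥ v ⬝ᵥ residualMaker A *ᵥ w = v ⬝ᵥ residualMaker A *ᵥ w := by
  rw [residualMaker_mulVec_dotProduct_comm, mulVec_mulVec, residualMaker_mul_self hA]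

lemma residualMaker_mulVec_dotProduct_mulVec (hA : IsUnit (Aᵀ * A)) (v : m → R) (c : ι → R) :
    residualMaker A *ᵥ v ⬝ᵥ A *ᵥ c = 0 := by
  rw [residualMaker_mulVec_dotProduct_comm, residualMaker_mulVec_mulVec hA, dotProduct_zero]

end CommRing

lemma residualMaker_mulVec_dotProduct_self_le [Field K] [LinearOrder K] [IsStrictOrderedRing K]
    {A : Matrix m ι K} (hA : IsUnit (Aᵀ * A)) (z : m → K) :
    residualMaker A *ᵥ z ⬝ᵥ residualMaker A *ᵥ z ≤ z ⬝ᵥ z := by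
  set c := ((Aᵀ * A)⁻¹ * Aᵀ) *ᵥ z
  have hz : z = residualMaker A *ᵥ z + A *ᵥ c := by
    rw [← sub_mulVec_eq_residualMaker_mulVec, sub_add_cancel]
  have horth := residualMaker_mulVec_dotProduct_mulVec hA z c
  conv_rhs => rw [hz]
  rw [add_dotProduct, dotProduct_add, dotProduct_add, horth, dotProduct_comm (A *ᵥ c), horth]
  linarith [dotProduct_self_nonneg (A *ᵥ c)]

section Regression

variable {n p : ℕ} (X : Matrix (Fin n) (Fin p) ℝ) {S : Finset (Fin p)}

local notation "M" => residualMaker (cols X S)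

lemma cols_mulVec (c : S → ℝ) : cols X S *ᵥ c = X *ᵥ Function.extend Subtype.val c 0 := by
  ext k
  simp only [mulVec, dotProduct, cols, submatrix_apply, id_eq]
  rw [← Finset.sum_subset (Finset.subset_univ S) fun i _ hi => by
      rw [Function.extend_apply' _ _ _ fun ⟨a, ha⟩ => hi (ha ▸ a.2), Pi.zero_apply, mul_zero],
    ← Finset.sum_coe_sort S]
  simp only [Subtype.val_injective.extend_apply]

lemma residualMaker_cols_mulVec_transpose_of_mem (hA : IsUnit ((cols X S)ᵀ * cols X S))
    {k : Fin p} (hk : k ∈ S) : M *ᵥ Xᵀ k = 0 := by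
  have hcol : cols X S *ᵥ Pi.single ⟨k, hk⟩ 1 = Xᵀ k := mulVec_single_one _ _
  rw [← hcol, residualMaker_mulVec_mulVec hA]

lemma residualMaker_cols_mulVec_mulVec_of_support (hA : IsUnit ((cols X S)ᵀ * cols X S))
    {j : Fin p} {β : Fin p → ℝ} (hβ : ∀ k ∉ insert j S, β k = 0) :
    M *ᵥ (X *ᵥ β) = β j • M *ᵥ Xᵀ j := by
  rw [mulVec_eq_sum β X]
  simp only [op_smul_eq_smul, mulVec_sum, mulVec_smul]
  refine Finset.sum_eq_single j (fun k _ hkj => ?_) (by simp)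
  by_cases hk : k ∈ S
  · rw [residualMaker_cols_mulVec_transpose_of_mem X hA hk, smul_zero]
  · rw [hβ k (by simp [hkj, hk]), zero_smul]

variable (y : Fin n → ℝ)

lemma isLeast_residual_insert (hA : IsUnit ((cols X S)ᵀ * cols X S)) (j : Fin p) :
    IsLeast {c : ℝ | ∃ β : Fin p → ℝ, (∀ k ∉ insert j S, β k = 0) ∧
        c = (y - X *ᵥ β) ⬝ᵥ (y - X *ᵥ β)}
      (M *ᵥ y ⬝ᵥ M *ᵥ y - (M *ᵥ y ⬝ᵥ M *ᵥ Xᵀ j) ^ 2 / (M *ᵥ Xᵀ j ⬝ᵥ M *ᵥ Xᵀ j)) := by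
  obtain ⟨⟨t, ht⟩, hlow⟩ := isLeast_dotProduct_sub_smul_self (M *ᵥ y) (M *ᵥ Xᵀ j)
  constructor
  · set b := (((cols X S)ᵀ * cols X S)⁻¹ * (cols X S)ᵀ) *ᵥ (y - t • Xᵀ j) with hb
    refine ⟨t • Pi.single j 1 + Function.extend Subtype.val b 0, fun k hk => ?_, ?_⟩
    · have hkS : ¬∃ i : S, i.1 = k := fun ⟨i, hi⟩ => hk (Finset.mem_insert_of_mem (hi ▸ i.2))
      have hkj : k ≠ j := fun h => hk (h ▸ Finset.mem_insert_self j S)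
      simp [Function.extend_apply' _ _ _ hkS, hkj]
    · have hcol : X *ᵥ Pi.single j 1 = Xᵀ j := mulVec_single_one X j
      have hfit : y - X *ᵥ (t • Pi.single j 1 + Function.extend Subtype.val b 0) =
          M *ᵥ y - t • M *ᵥ Xᵀ j := by
        rw [mulVec_add, mulVec_smul, hcol, ← cols_mulVec, ← sub_sub, hb,
          sub_mulVec_eq_residualMaker_mulVec, mulVec_sub, mulVec_smul]
      rw [hfit, ← ht]
  · rintro _ ⟨β, hβ, rfl⟩
    calc _ ≤ (M *ᵥ y - β j • M *ᵥ Xᵀ j) ⬝ᵥ (M *ᵥ y - β j • M *ᵥ Xᵀ j) := hlow ⟨β j, rfl⟩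
      _ = M *ᵥ (y - X *ᵥ β) ⬝ᵥ M *ᵥ (y - X *ᵥ β) := by
          rw [mulVec_sub, residualMaker_cols_mulVec_mulVec_of_support X hA hβ]
      _ ≤ _ := residualMaker_mulVec_dotProduct_self_le hA _

lemma score_eq_residualMaker (hA : IsUnit ((cols X S)ᵀ * cols X S)) (j : Fin p) :
    score X y S j = (M *ᵥ y ⬝ᵥ M *ᵥ Xᵀ j) ^ 2 / (M *ᵥ Xᵀ j ⬝ᵥ M *ᵥ Xᵀ j) := by
  have hr : y - (cols X S * ((cols X S)ᵀ * cols X S)⁻¹ * (cols X S)ᵀ) *ᵥ y = M *ᵥ y := by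
    rw [residualMaker, sub_mulVec, one_mulVec]
  rw [score, hr]
  change (M *ᵥ y ⬝ᵥ Xᵀ j) ^ 2 / (Xᵀ j ⬝ᵥ M *ᵥ Xᵀ j) = _
  rw [residualMaker_mulVec_dotProduct_comm,
    residualMaker_mulVec_dotProduct_residualMaker_mulVec hA,
    residualMaker_mulVec_dotProduct_residualMaker_mulVec hA]

lemma fobj_insert_eq_sub_score (hA : IsUnit ((cols X S)ᵀ * cols X S)) (j : Fin p) :
    fobj X y (insert j S) = M *ᵥ y ⬝ᵥ M *ᵥ y - score X y S j := by
  rw [fobj, (isLeast_residual_insert X y hA j).csInf_eq, score_eq_residualMaker X y hA]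

end Regression

theorem optimal_selection_general {n p : ℕ} (X : Matrix (Fin n) (Fin p) ℝ) (y : Fin n → ℝ)
    (S : Finset (Fin p))
    (hrank : IsUnit ((cols X S)ᵀ * cols X S))
    (jstar : Fin p)
    (hmax : ∀ j ∉ S, score X y S j ≤ score X y S jstar) :
    ∀ j ∉ S, fobj X y (insert jstar S) ≤ fobj X y (insert j S) := by
  intro j hj
  rw [fobj_insert_eq_sub_score X y hrank, fobj_insert_eq_sub_score X y hrank]
  linarith [hmax j hj]

/-- The index maximizing the objective-based selection criterion is the optimal
single-feature addition. -/
theorem optimal_selection {n p : ℕ} (X : Matrix (Fin n) (Fin p) ℝ) (y : Fin n → ℝ)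
    (S : Finset (Fin p))
    (hrank : IsUnit ((cols X S)ᵀ * cols X S))
    (hspan : ∀ j ∉ S, Xᵀ j ∉ Submodule.span ℝ (Set.range fun i : ↥S => Xᵀ (i : Fin p)))
    (jstar : Fin p) (hjstar : jstar ∉ S)
    (hmax : ∀ j ∉ S, score X y S j ≤ score X y S jstar) :
    ∀ j ∉ S, fobj X y (insert jstar S) ≤ fobj X y (insert j S) :=
  optimal_selection_general X y S hrank jstar hmax
end

section
/- Let X ∈ ℝ^{n×p}, y = Xβ* + ε, and let β^k minimize ‖y − Xβ‖₂ over β supported on a set S_k with |S_k| ≤ K, where β* is K-sparse. Suppose for E = supp(β*) ∪ S_k (so |E| ≤ 2K) the matrix X satisfies (1−δ)‖v‖² ≤ ‖X_E v‖² ≤ (1+δ)‖v‖² for all v and some δ ∈ [0,1). Then for any vector a supported on S_k, ‖β^k − β*‖₂ ≤ √((1+δ)/(1−δ)) ‖β* − a‖₂ + (2/√(1−δ)) ‖ε‖₂. -/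
open Matrix Finset

/-!
Both `β^k - β*` and `β* - a` are supported on `E = supp β* ∪ S_k`, where the restricted isometry
bounds hold. Chaining them with the triangle inequality and the least-squares property,
`√(1-δ) ‖β^k - β*‖ ≤ ‖X (β^k - β*)‖ ≤ ‖y - X β^k‖ + ‖ε‖ ≤ ‖y - X a‖ + ‖ε‖`
`  ≤ ‖X (β* - a)‖ + 2 ‖ε‖ ≤ √(1+δ) ‖β* - a‖ + 2 ‖ε‖`.
-/

theorem norm_sub_le_of_norm_residual_le {E F : Type*} [SeminormedAddCommGroup E]
    [SeminormedAddCommGroup F] (f : E →+ F) {b bstar a : E} {e : F} {l u : ℝ} (hl : 0 < l)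
    (hmin : ‖f bstar + e - f b‖ ≤ ‖f bstar + e - f a‖)
    (hlower : l * ‖b - bstar‖ ≤ ‖f (b - bstar)‖)
    (hupper : ‖f (bstar - a)‖ ≤ u * ‖bstar - a‖) :
    ‖b - bstar‖ ≤ u / l * ‖bstar - a‖ + 2 / l * ‖e‖ := by
  have key : l * ‖b - bstar‖ ≤ u * ‖bstar - a‖ + 2 * ‖e‖ :=
    calc l * ‖b - bstar‖ ≤ ‖f (b - bstar)‖ := hlower
      _ = ‖e - (f bstar + e - f b)‖ := by rw [map_sub]; congr 1; abel
      _ ≤ ‖e‖ + ‖f bstar + e - f b‖ := norm_sub_le _ _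
      _ ≤ ‖e‖ + ‖f bstar + e - f a‖ := by gcongr
      _ = ‖e‖ + ‖f (bstar - a) + e‖ := by rw [map_sub]; congr 2; abel
      _ ≤ ‖e‖ + (‖f (bstar - a)‖ + ‖e‖) := by gcongr; exact norm_add_le _ _
      _ ≤ u * ‖bstar - a‖ + 2 * ‖e‖ := by linarith
  rw [div_mul_eq_mul_div, div_mul_eq_mul_div, ← add_div, le_div_iff₀ hl]
  linarith

theorem dotProduct_self_nonneg_s11 {ι R : Type*} [Fintype ι] [Ring R] [LinearOrder R]
    [IsStrictOrderedRing R] (w : ι → R) : 0 ≤ w ⬝ᵥ w :=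
  Finset.sum_nonneg fun i _ => mul_self_nonneg (w i)

theorem sqrt_dotProduct_self_eq_norm {ι : Type*} [Fintype ι] (w : ι → ℝ) :
    √(w ⬝ᵥ w) = ‖WithLp.toLp 2 w‖ := by
  rw [norm_eq_sqrt_real_inner, EuclideanSpace.inner_toLp_toLp, star_trivial]

section MatrixEuclidean

variable {ι κ : Type*} [Fintype ι] [Fintype κ] [DecidableEq κ]

theorem norm_toLpLin_toLp (X : Matrix ι κ ℝ) (v : κ → ℝ) :
    ‖toLpLin 2 2 X (WithLp.toLp 2 v)‖ = √((X *ᵥ v) ⬝ᵥ (X *ᵥ v)) := by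
  rw [toLpLin_toLp, toLin'_apply, sqrt_dotProduct_self_eq_norm]

theorem sqrt_mul_norm_le_norm_toLpLin {X : Matrix ι κ ℝ} {v : κ → ℝ} {c : ℝ}
    (h : c * (v ⬝ᵥ v) ≤ (X *ᵥ v) ⬝ᵥ (X *ᵥ v)) :
    √c * ‖WithLp.toLp 2 v‖ ≤ ‖toLpLin 2 2 X (WithLp.toLp 2 v)‖ := by
  rw [norm_toLpLin_toLp, ← sqrt_dotProduct_self_eq_norm,
    ← Real.sqrt_mul' c (dotProduct_self_nonneg_s11 v)]
  exact Real.sqrt_le_sqrt h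

theorem norm_toLpLin_le_sqrt_mul_norm {X : Matrix ι κ ℝ} {v : κ → ℝ} {c : ℝ}
    (h : (X *ᵥ v) ⬝ᵥ (X *ᵥ v) ≤ c * (v ⬝ᵥ v)) :
    ‖toLpLin 2 2 X (WithLp.toLp 2 v)‖ ≤ √c * ‖WithLp.toLp 2 v‖ := by
  rw [norm_toLpLin_toLp, ← sqrt_dotProduct_self_eq_norm,
    ← Real.sqrt_mul' c (dotProduct_self_nonneg_s11 v)]
  exact Real.sqrt_le_sqrt h

end MatrixEuclidean

theorem least_square_bound_general {n p : ℕ} (X : Matrix (Fin n) (Fin p) ℝ)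
    (βstar : Fin p → ℝ) (ε : Fin n → ℝ) (y : Fin n → ℝ)
    (hy : y = X.mulVec βstar + ε)
    (Sk : Finset (Fin p))
    (βk : Fin p → ℝ) (hβkSupp : ∀ j ∉ Sk, βk j = 0)
    (hβkLS : ∀ a : Fin p → ℝ, (∀ j ∉ Sk, a j = 0) →
      Real.sqrt ((y - X.mulVec βk) ⬝ᵥ (y - X.mulVec βk)) ≤
        Real.sqrt ((y - X.mulVec a) ⬝ᵥ (y - X.mulVec a)))
    (δ : ℝ) (hδ1 : δ < 1)
    (hRIP : ∀ v : Fin p → ℝ,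
      (∀ j, j ∉ (Finset.univ.filter fun i => βstar i ≠ 0) ∪ Sk → v j = 0) →
      (1 - δ) * (v ⬝ᵥ v) ≤ (X.mulVec v) ⬝ᵥ (X.mulVec v) ∧
        (X.mulVec v) ⬝ᵥ (X.mulVec v) ≤ (1 + δ) * (v ⬝ᵥ v)) :
    ∀ a : Fin p → ℝ, (∀ j ∉ Sk, a j = 0) →
      Real.sqrt ((fun j => βk j - βstar j) ⬝ᵥ (fun j => βk j - βstar j)) ≤
        Real.sqrt ((1 + δ) / (1 - δ)) *
            Real.sqrt ((fun j => βstar j - a j) ⬝ᵥ (fun j => βstar j - a j)) +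
          (2 / Real.sqrt (1 - δ)) * Real.sqrt (ε ⬝ᵥ ε) := by
  intro a ha
  have hδ : 0 < 1 - δ := by linarith
  have eq_on_support : ∀ c : Fin p → ℝ, (∀ j ∉ Sk, c j = 0) →
      ∀ j, j ∉ (univ.filter fun i => βstar i ≠ 0) ∪ Sk → c j = βstar j := by
    intro c hc j hj
    simp_all
  obtain ⟨hlower, -⟩ :=
    hRIP (βk - βstar) fun j hj => sub_eq_zero.2 (eq_on_support βk hβkSupp j hj)
  obtain ⟨-, hupper⟩ :=
    hRIP (βstar - a) fun j hj => sub_eq_zero.2 (eq_on_support a ha j hj).symm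
  have hmin := hβkLS a ha
  rw [hy, sqrt_dotProduct_self_eq_norm, sqrt_dotProduct_self_eq_norm] at hmin
  have key := norm_sub_le_of_norm_residual_le (toLpLin 2 2 X).toAddMonoidHom
    (Real.sqrt_pos.2 hδ) hmin (sqrt_mul_norm_le_norm_toLpLin hlower)
    (norm_toLpLin_le_sqrt_mul_norm hupper)
  rw [Real.sqrt_div' _ hδ.le]
  simp only [sqrt_dotProduct_self_eq_norm]
  exact key

/-- Least-squares estimation error bound under a restricted-isometry-type condition. -/
theorem least_square_bound {n p K : ℕ} (X : Matrix (Fin n) (Fin p) ℝ)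
    (βstar : Fin p → ℝ) (ε : Fin n → ℝ) (y : Fin n → ℝ)
    (hy : y = X.mulVec βstar + ε)
    (hβstar : (Finset.univ.filter fun i => βstar i ≠ 0).card ≤ K)
    (Sk : Finset (Fin p)) (hSk : Sk.card ≤ K)
    (βk : Fin p → ℝ) (hβkSupp : ∀ j ∉ Sk, βk j = 0)
    (hβkLS : ∀ a : Fin p → ℝ, (∀ j ∉ Sk, a j = 0) →
      Real.sqrt ((y - X.mulVec βk) ⬝ᵥ (y - X.mulVec βk)) ≤
        Real.sqrt ((y - X.mulVec a) ⬝ᵥ (y - X.mulVec a)))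
    (δ : ℝ) (hδ0 : 0 ≤ δ) (hδ1 : δ < 1)
    (hRIP : ∀ v : Fin p → ℝ,
      (∀ j, j ∉ (Finset.univ.filter fun i => βstar i ≠ 0) ∪ Sk → v j = 0) →
      (1 - δ) * (v ⬝ᵥ v) ≤ (X.mulVec v) ⬝ᵥ (X.mulVec v) ∧
        (X.mulVec v) ⬝ᵥ (X.mulVec v) ≤ (1 + δ) * (v ⬝ᵥ v)) :
    ∀ a : Fin p → ℝ, (∀ j ∉ Sk, a j = 0) →
      Real.sqrt ((fun j => βk j - βstar j) ⬝ᵥ (fun j => βk j - βstar j)) ≤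
        Real.sqrt ((1 + δ) / (1 - δ)) *
            Real.sqrt ((fun j => βstar j - a j) ⬝ᵥ (fun j => βstar j - a j)) +
          (2 / Real.sqrt (1 - δ)) * Real.sqrt (ε ⬝ᵥ ε) :=
  least_square_bound_general X βstar ε y hy Sk βk hβkSupp hβkLS δ hδ1 hRIP
end

section
/- Let X ∈ ℝ^{n×p}, let S* ⊆ {1,…,p} contain indices i and j with i ≠ j, and define ρ = |X_iᵀ X_j| / (‖X_i‖₂ ‖X_j‖₂) with ρ < 1. Suppose S ⊆ {1,…,p} contains i (with X_S full column rank), and let r be the residual of the least-squares fit of y on X_S. Then |rᵀ X_j| / ‖X_j‖₂ ≤ √(1 − ρ²) ‖r‖₂. -/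
open Matrix

/-!
The residual `r` satisfies the normal equations `X_Sᵀ r = 0`, so it is orthogonal to `X_i`.
Hence `rᵀ X_j = rᵀ w`, where `w` is the component of `X_j` orthogonal to `X_i`. With `θ` the angle
between `X_i` and `X_j` we have `ρ = |cos θ|` and `‖w‖ = ‖X_j‖ sin θ = ‖X_j‖ √(1 - ρ²)`, and
Cauchy–Schwarz for `rᵀ w` gives the bound.
-/

open InnerProductGeometry Real
open scoped RealInnerProductSpace

section LeastSquares

variable {m k R : Type*} [Fintype m] [Fintype k] [DecidableEq k] [CommRing R]

theorem Matrix.transpose_mulVec_sub_hat_mulVec {A : Matrix m k R} (hA : IsUnit (Aᵀ * A))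
    (y : m → R) : Aᵀ *ᵥ (y - (A * (Aᵀ * A)⁻¹ * Aᵀ) *ᵥ y) = 0 := by
  rw [mulVec_sub, mulVec_mulVec, ← Matrix.mul_assoc, ← Matrix.mul_assoc,
    mul_nonsing_inv _ ((isUnit_iff_isUnit_det _).mp hA), Matrix.one_mul, sub_self]

end LeastSquares

section Angle

variable {V : Type*} [NormedAddCommGroup V] [InnerProductSpace ℝ V]

theorem norm_sub_smul_eq_mul_sin_angle (u v : V) :
    ‖v - (⟪u, v⟫ / ‖u‖ ^ 2) • u‖ = ‖v‖ * sin (angle u v) := by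
  rcases eq_or_ne u 0 with rfl | hu
  · simp
  have hu' : ‖u‖ ≠ 0 := norm_ne_zero_iff.mpr hu
  refine (pow_left_inj₀ (norm_nonneg _) (mul_nonneg (norm_nonneg v) (sin_angle_nonneg u v))
    two_ne_zero).mp ?_
  have hcos := cos_angle_mul_norm_mul_norm u v
  rw [norm_sub_sq_real, inner_smul_right, norm_smul, mul_pow, mul_pow, sin_sq,
    real_inner_comm u v, ← hcos, Real.norm_eq_abs, sq_abs]
  field_simp
  ring

theorem abs_inner_le_mul_sin_angle_of_inner_eq_zero {r u : V} (hru : ⟪r, u⟫ = 0) (v : V) :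
    |⟪r, v⟫| ≤ ‖r‖ * (‖v‖ * sin (angle u v)) := by
  have hproj : ⟪r, v⟫ = ⟪r, v - (⟪u, v⟫ / ‖u‖ ^ 2) • u⟫ := by
    rw [inner_sub_right, inner_smul_right, hru, mul_zero, sub_zero]
  rw [hproj, ← norm_sub_smul_eq_mul_sin_angle]
  exact abs_real_inner_le_norm _ _

end Angle

section EuclideanSpace

variable {ι : Type*} [Fintype ι]

theorem dotProduct_eq_inner_toLp (x y : ι → ℝ) :
    x ⬝ᵥ y = ⟪WithLp.toLp 2 x, WithLp.toLp 2 y⟫ := by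
  rw [EuclideanSpace.inner_toLp_toLp, star_trivial, dotProduct_comm]

theorem sqrt_dotProduct_self_eq_norm_toLp (x : ι → ℝ) : √(x ⬝ᵥ x) = ‖WithLp.toLp 2 x‖ := by
  rw [dotProduct_eq_inner_toLp, norm_eq_sqrt_real_inner]

theorem abs_dotProduct_div_le_of_dotProduct_eq_zero {r u : ι → ℝ} (hru : r ⬝ᵥ u = 0)
    (v : ι → ℝ) :
    |r ⬝ᵥ v| / √(v ⬝ᵥ v) ≤ √(1 - (|u ⬝ᵥ v| / (√(u ⬝ᵥ u) * √(v ⬝ᵥ v))) ^ 2) * √(r ⬝ᵥ r) := by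
  simp only [sqrt_dotProduct_self_eq_norm_toLp]
  rw [dotProduct_eq_inner_toLp] at hru
  rw [dotProduct_eq_inner_toLp, dotProduct_eq_inner_toLp, div_pow, sq_abs, ← div_pow,
    ← cos_angle, ← sin_sq, sqrt_sq (sin_angle_nonneg _ _)]
  refine div_le_of_le_mul₀ (norm_nonneg _)
    (mul_nonneg (sin_angle_nonneg _ _) (norm_nonneg _)) ?_
  calc _ ≤ _ := abs_inner_le_mul_sin_angle_of_inner_eq_zero hru _
    _ = _ := by ring

end EuclideanSpace

theorem correlation_criterion_bound_general {n p : ℕ} (X : Matrix (Fin n) (Fin p) ℝ)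
    (y : Fin n → ℝ) (S : Finset (Fin p)) (i j : Fin p)
    (ρ : ℝ)
    (hρ : ρ = |(Xᵀ i) ⬝ᵥ (Xᵀ j)| /
      (Real.sqrt ((Xᵀ i) ⬝ᵥ (Xᵀ i)) * Real.sqrt ((Xᵀ j) ⬝ᵥ (Xᵀ j))))
    (hiInS : i ∈ S)
    (hrank : IsUnit ((cols X S)ᵀ * cols X S))
    (r : Fin n → ℝ)
    (hr : r = y - (cols X S * ((cols X S)ᵀ * cols X S)⁻¹ * (cols X S)ᵀ).mulVec y) :
    |r ⬝ᵥ (Xᵀ j)| / Real.sqrt ((Xᵀ j) ⬝ᵥ (Xᵀ j)) ≤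
      Real.sqrt (1 - ρ ^ 2) * Real.sqrt (r ⬝ᵥ r) := by
  subst hρ
  refine abs_dotProduct_div_le_of_dotProduct_eq_zero ?_ _
  rw [dotProduct_comm, hr]
  exact congrFun (transpose_mulVec_sub_hat_mulVec hrank y) ⟨i, hiInS⟩

/-- If feature `j` is highly correlated with an already-selected feature `i`, the
classical correlation-based criterion for `j` is bounded by `√(1-ρ²) ‖r‖₂`. -/
theorem correlation_criterion_bound {n p : ℕ} (X : Matrix (Fin n) (Fin p) ℝ)
    (y : Fin n → ℝ) (Sstar S : Finset (Fin p)) (i j : Fin p)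
    (hiS : i ∈ Sstar) (hjS : j ∈ Sstar) (hij : i ≠ j)
    (ρ : ℝ)
    (hρ : ρ = |(Xᵀ i) ⬝ᵥ (Xᵀ j)| /
      (Real.sqrt ((Xᵀ i) ⬝ᵥ (Xᵀ i)) * Real.sqrt ((Xᵀ j) ⬝ᵥ (Xᵀ j))))
    (hρlt : ρ < 1)
    (hiInS : i ∈ S)
    (hrank : IsUnit ((cols X S)ᵀ * cols X S))
    (r : Fin n → ℝ)
    (hr : r = y - (cols X S * ((cols X S)ᵀ * cols X S)⁻¹ * (cols X S)ᵀ).mulVec y) :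
    |r ⬝ᵥ (Xᵀ j)| / Real.sqrt ((Xᵀ j) ⬝ᵥ (Xᵀ j)) ≤
      Real.sqrt (1 - ρ ^ 2) * Real.sqrt (r ⬝ᵥ r) :=
  correlation_criterion_bound_general X y S i j ρ hρ hiInS hrank r hr
end

section
/- Let X ∈ ℝ^{n×p} with unit-norm columns, S ⊆ {1,…,p} with |S| ≤ K, j ∉ S, and suppose X satisfies: ‖X_Sᵀ X_j‖₂ ≤ δ_{K+1} and the smallest singular value of X_S is at least √(1 − δ_K), for constants 0 ≤ δ_K ≤ δ_{K+1} < 1 with δ_{K+1}/√(1−δ_K) < 1. Then 1 − δ_{K+1}/√(1−δ_K) ≤ X_jᵀ (I − X_S (X_Sᵀ X_S)⁻¹ X_Sᵀ) X_j ≤ 1. -/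
/-!
Write `A = X_S`, `b = Aᵀ X_j` and `w = (AᵀA)⁻¹ b`, so that the quantity is `‖X_j‖² - b ⬝ w` and
`b ⬝ w = ‖A w‖² ≥ 0`. With `c = 1 - δ_K`, the singular-value bound gives `c ‖w‖² ≤ b ⬝ w`, and
expanding `0 ≤ ‖b - c w‖²` turns this into `c (b ⬝ w) ≤ ‖b‖² ≤ δ_{K+1}²`. Hence
`b ⬝ w ≤ (δ_{K+1} / √(1 - δ_K))² ≤ δ_{K+1} / √(1 - δ_K)`, the ratio lying in `[0, 1)`.
-/

open Matrix

section Gram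

variable {m k : Type*} [Fintype m] [Fintype k]

lemma dotProduct_gram_mulVec (A : Matrix m k ℝ) (x : k → ℝ) :
    x ⬝ᵥ (Aᵀ * A) *ᵥ x = A *ᵥ x ⬝ᵥ A *ᵥ x := by
  rw [← mulVec_mulVec, dotProduct_mulVec, vecMul_transpose]

lemma isUnit_det_gram_of_le [DecidableEq k] {A : Matrix m k ℝ} {c : ℝ} (hc : 0 < c)
    (hA : ∀ x, c * (x ⬝ᵥ x) ≤ A *ᵥ x ⬝ᵥ A *ᵥ x) : IsUnit (Aᵀ * A).det := by
  rw [isUnit_iff_ne_zero, Ne, ← exists_mulVec_eq_zero_iff]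
  rintro ⟨x, hx, hGx⟩
  have hcx := hA x
  rw [← dotProduct_gram_mulVec, hGx, dotProduct_zero] at hcx
  exact hx (dotProduct_self_eq_zero.mp
    (le_antisymm (nonpos_of_mul_nonpos_right hcx hc) (dotProduct_self_star_nonneg x)))

lemma dotProduct_one_sub_mul_gram_inv_mul_mulVec [DecidableEq m] [DecidableEq k]
    (A : Matrix m k ℝ) (v : m → ℝ) :
    v ⬝ᵥ (1 - A * (Aᵀ * A)⁻¹ * Aᵀ) *ᵥ v = v ⬝ᵥ v - Aᵀ *ᵥ v ⬝ᵥ (Aᵀ * A)⁻¹ *ᵥ Aᵀ *ᵥ v := by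
  rw [sub_mulVec, one_mulVec, dotProduct_sub, Matrix.mul_assoc, ← mulVec_mulVec,
    dotProduct_mulVec, ← mulVec_transpose, ← mulVec_mulVec]

lemma dotProduct_gram_inv_mulVec_nonneg [DecidableEq k] (A : Matrix m k ℝ) (b : k → ℝ) :
    0 ≤ b ⬝ᵥ (Aᵀ * A)⁻¹ *ᵥ b := by
  simpa only [conjTranspose_eq_transpose_of_trivial, star_trivial] using
    (posSemidef_conjTranspose_mul_self A).inv.dotProduct_mulVec_nonneg b

lemma mul_dotProduct_gram_inv_mulVec_le [DecidableEq k] {A : Matrix m k ℝ} {c : ℝ}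
    (hc : 0 < c) (hA : ∀ x, c * (x ⬝ᵥ x) ≤ A *ᵥ x ⬝ᵥ A *ᵥ x) (b : k → ℝ) :
    c * (b ⬝ᵥ (Aᵀ * A)⁻¹ *ᵥ b) ≤ b ⬝ᵥ b := by
  set w := (Aᵀ * A)⁻¹ *ᵥ b
  have hGw : (Aᵀ * A) *ᵥ w = b := by
    rw [mulVec_mulVec, mul_nonsing_inv _ (isUnit_det_gram_of_le hc hA), one_mulVec]
  have hw : c * (w ⬝ᵥ w) ≤ b ⬝ᵥ w := by
    simpa only [← dotProduct_gram_mulVec, hGw, dotProduct_comm w] using hA w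
  have hsq := dotProduct_self_star_nonneg (b - c • w)
  simp only [star_trivial, sub_dotProduct, dotProduct_sub, smul_dotProduct, dotProduct_smul,
    smul_eq_mul, dotProduct_comm w b] at hsq
  linarith [mul_le_mul_of_nonneg_left hw hc.le]

end Gram

lemma cols_transpose_mulVec {n p : ℕ} (X : Matrix (Fin n) (Fin p) ℝ) (S : Finset (Fin p))
    (v : Fin n → ℝ) : (cols X S)ᵀ *ᵥ v = fun i : S => Xᵀ (i : Fin p) ⬝ᵥ v :=
  rfl

theorem projected_norm_rip_bound_general {n p : ℕ} (X : Matrix (Fin n) (Fin p) ℝ)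
    (hunit : ∀ j : Fin p, (Xᵀ j) ⬝ᵥ (Xᵀ j) = 1)
    (S : Finset (Fin p)) (j : Fin p)
    (δK δK1 : ℝ) (hKK1 : δK ≤ δK1) (h1 : δK1 < 1)
    (hratio : δK1 / Real.sqrt (1 - δK) < 1)
    (hcorr : Real.sqrt (∑ i : ↥S, ((Xᵀ (i : Fin p)) ⬝ᵥ (Xᵀ j)) ^ 2) ≤ δK1)
    (hsingular : ∀ v : ↥S → ℝ,
      (1 - δK) * (v ⬝ᵥ v) ≤ ((cols X S).mulVec v) ⬝ᵥ ((cols X S).mulVec v)) :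
    1 - δK1 / Real.sqrt (1 - δK) ≤
        (Xᵀ j) ⬝ᵥ ((1 - cols X S * ((cols X S)ᵀ * cols X S)⁻¹ * (cols X S)ᵀ).mulVec (Xᵀ j)) ∧
      (Xᵀ j) ⬝ᵥ ((1 - cols X S * ((cols X S)ᵀ * cols X S)⁻¹ * (cols X S)ᵀ).mulVec (Xᵀ j)) ≤ 1 := by
  set A := cols X S
  set b := Aᵀ *ᵥ Xᵀ j
  obtain ⟨hδ, hb⟩ := Real.sqrt_le_iff.mp hcorr
  have hc : 0 < 1 - δK := by linarith
  have hs : 0 < √(1 - δK) := Real.sqrt_pos.mpr hc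
  have hbb : b ⬝ᵥ b ≤ δK1 ^ 2 := by
    simpa only [b, A, cols_transpose_mulVec, dotProduct, sq] using hb
  have hcb : (1 - δK) * (b ⬝ᵥ (Aᵀ * A)⁻¹ *ᵥ b) ≤ δK1 ^ 2 :=
    (mul_dotProduct_gram_inv_mulVec_le hc hsingular b).trans hbb
  have hproj : b ⬝ᵥ (Aᵀ * A)⁻¹ *ᵥ b ≤ δK1 / √(1 - δK) :=
    calc b ⬝ᵥ (Aᵀ * A)⁻¹ *ᵥ b ≤ (δK1 / √(1 - δK)) ^ 2 := by
          rw [div_pow, Real.sq_sqrt hc.le, le_div_iff₀ hc]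
          linarith
      _ ≤ δK1 / √(1 - δK) := sq_le (div_nonneg hδ hs.le) hratio.le
  rw [dotProduct_one_sub_mul_gram_inv_mul_mulVec, hunit]
  exact ⟨by linarith, by linarith [dotProduct_gram_inv_mulVec_nonneg A b]⟩

/-- RIP-type two-sided bound on `X_jᵀ (I - P_S) X_j` for unit-norm columns. -/
theorem projected_norm_rip_bound {n p K : ℕ} (X : Matrix (Fin n) (Fin p) ℝ)
    (hunit : ∀ j : Fin p, (Xᵀ j) ⬝ᵥ (Xᵀ j) = 1)
    (S : Finset (Fin p)) (hS : S.card ≤ K) (j : Fin p) (hj : j ∉ S)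
    (δK δK1 : ℝ) (h0 : 0 ≤ δK) (hKK1 : δK ≤ δK1) (h1 : δK1 < 1)
    (hratio : δK1 / Real.sqrt (1 - δK) < 1)
    (hcorr : Real.sqrt (∑ i : ↥S, ((Xᵀ (i : Fin p)) ⬝ᵥ (Xᵀ j)) ^ 2) ≤ δK1)
    (hsingular : ∀ v : ↥S → ℝ,
      (1 - δK) * (v ⬝ᵥ v) ≤ ((cols X S).mulVec v) ⬝ᵥ ((cols X S).mulVec v)) :
    1 - δK1 / Real.sqrt (1 - δK) ≤
        (Xᵀ j) ⬝ᵥ ((1 - cols X S * ((cols X S)ᵀ * cols X S)⁻¹ * (cols X S)ᵀ).mulVec (Xᵀ j)) ∧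
      (Xᵀ j) ⬝ᵥ ((1 - cols X S * ((cols X S)ᵀ * cols X S)⁻¹ * (cols X S)ᵀ).mulVec (Xᵀ j)) ≤ 1 :=
  projected_norm_rip_bound_general X hunit S j δK δK1 hKK1 h1 hratio hcorr hsingular
end
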